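/- For every n ≥ 1, the graph B_n is isomorphic to the intersection graph of a finite family of axis-parallel closed line segments in ℝ² among which at most two distinct (Euclidean) lengths occur. -/

import Mathlib

/-- Vertex set of `B_n`: the `u_i`'s, the `w_j`'s, the subdivision vertices `x_{i,j}` and
`y_{i,j}`. -/
abbrev BnV (n : ℕ) : Type := (Fin n ⊕ Fin n) ⊕ ((Fin n × Fin n) ⊕ (Fin n × Fin n))

/-- The edges of `B_n`: exactly `u_i w_j`, `u_i x_{i,j}`, `x_{i,j} y_{i,j}` and
`y_{i,j} w_j` for all `i, j`. -/
def BnRel (n : ℕ) : BnV n → BnV n → Prop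
  | Sum.inl (Sum.inl _), Sum.inl (Sum.inr _) => True
  | Sum.inl (Sum.inl i), Sum.inr (Sum.inl p) => p.1 = i
  | Sum.inr (Sum.inl p), Sum.inr (Sum.inr q) => p = q
  | Sum.inr (Sum.inr p), Sum.inl (Sum.inr j) => p.2 = j
  | _, _ => False

/-- The graph `B_n`: obtained from `K_{n,n}` by subdividing every edge twice and adding
back the original edges. -/
def BnGraph (n : ℕ) : SimpleGraph (BnV n) := SimpleGraph.fromRel (BnRel n)

/-!
Draw `u_i` as the horizontal segment `[0, 2n] × {2i}` and `w_j` as the vertical segment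
`{2j} × [-2, 2n - 2]`, so that every `u_i` crosses every `w_j`. The path `u_i x_{ij} y_{ij} w_j`
lives in the unit cell below and to the right of that crossing: `x_{ij} = {2j + 1} × [2i - 1, 2i]`
hangs from `u_i`, and `y_{ij} = [2j, 2j + 1] × {2i - 1}` joins the foot of `x_{ij}` to `w_j`.
The lengths are `2n` and `1`. With all coordinates integers, an axis-parallel segment is the box
spanned by its endpoints, and two such boxes meet iff their coordinate intervals overlap, so
adjacency becomes a system of integer inequalities.
-/

open Set

namespace EuclideanSpace

variable {ι : Type*}

lemma apply_mem_segment {P Q z : EuclideanSpace ℝ ι} (hz : z ∈ segment ℝ P Q) (k : ι) :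
    z k ∈ segment ℝ (P k) (Q k) := by
  obtain ⟨a, b, ha, hb, hab, rfl⟩ := hz
  exact ⟨a, b, ha, hb, hab, by simp⟩

lemma segment_eq_box {P Q : EuclideanSpace ℝ ι} (hPQ : ∀ k, P k ≤ Q k) (i : ι)
    (haxis : ∀ k ≠ i, P k = Q k) : segment ℝ P Q = {z | ∀ k, z k ∈ Icc (P k) (Q k)} := by
  ext z
  refine ⟨fun hz k => segment_eq_Icc (hPQ k) ▸ apply_mem_segment hz k, fun hz => ?_⟩
  obtain ⟨a, b, ha, hb, hab, hzi⟩ := (segment_eq_Icc (hPQ i)).symm ▸ hz i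
  refine ⟨a, b, ha, hb, hab, ?_⟩
  ext k
  by_cases hk : k = i
  · subst hk; simpa using hzi
  · have hPz : P k = z k := le_antisymm (hz k).1 (haxis k hk ▸ (hz k).2)
    simp [← haxis k hk, hPz, ← add_mul, hab]

lemma segment_inter_nonempty_iff {P Q P' Q' : EuclideanSpace ℝ ι}
    (hPQ : ∀ k, P k ≤ Q k) (i : ι) (haxis : ∀ k ≠ i, P k = Q k)
    (hPQ' : ∀ k, P' k ≤ Q' k) (i' : ι) (haxis' : ∀ k ≠ i', P' k = Q' k) :
    (segment ℝ P Q ∩ segment ℝ P' Q').Nonempty ↔ ∀ k, P k ≤ Q' k ∧ P' k ≤ Q k := by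
  rw [segment_eq_box hPQ i haxis, segment_eq_box hPQ' i' haxis']
  constructor
  · rintro ⟨z, hz, hz'⟩ k
    exact ⟨(hz k).1.trans (hz' k).2, (hz' k).1.trans (hz k).2⟩
  · intro h
    refine ⟨WithLp.toLp 2 fun k => max (P k) (P' k), fun k => ?_, fun k => ?_⟩ <;>
      simp [hPQ k, hPQ' k, h k]

lemma eq_and_eq_of_segment_eq {P Q P' Q' : EuclideanSpace ℝ ι}
    (hPQ : ∀ k, P k ≤ Q k) (hPQ' : ∀ k, P' k ≤ Q' k) (h : segment ℝ P Q = segment ℝ P' Q') :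
    P = P' ∧ Q = Q' := by
  have hbox {A B A' B' : EuclideanSpace ℝ ι} (hAB' : ∀ k, A' k ≤ B' k)
      (h : segment ℝ A B = segment ℝ A' B') : ∀ k, A' k ≤ A k ∧ B k ≤ B' k := fun k =>
    ⟨(segment_eq_Icc (hAB' k) ▸ apply_mem_segment (h ▸ left_mem_segment ℝ A B) k).1,
     (segment_eq_Icc (hAB' k) ▸ apply_mem_segment (h ▸ right_mem_segment ℝ A B) k).2⟩
  have h₁ := hbox hPQ' h
  have h₂ := hbox hPQ h.symm
  exact ⟨PiLp.ext fun k => le_antisymm (h₂ k).1 (h₁ k).1,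
    PiLp.ext fun k => le_antisymm (h₁ k).2 (h₂ k).2⟩

lemma dist_eq_abs_of_forall_ne [Fintype ι] {P Q : EuclideanSpace ℝ ι} (i : ι)
    (h : ∀ k ≠ i, P k = Q k) : dist P Q = |P i - Q i| := by
  classical
  rw [EuclideanSpace.dist_eq, Finset.sum_eq_single i (fun k _ hk => by simp [h k hk]) (by simp),
    Real.sqrt_sq_eq_abs, Real.dist_eq, abs_abs]

end EuclideanSpace

namespace BnGraph

variable {n : ℕ}

def lo : BnV n → Fin 2 → ℤ
  | .inl (.inl i) => ![0, 2 * i]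
  | .inl (.inr j) => ![2 * j, -2]
  | .inr (.inl (i, j)) => ![2 * j + 1, 2 * i - 1]
  | .inr (.inr (i, j)) => ![2 * j, 2 * i - 1]

def hi : BnV n → Fin 2 → ℤ
  | .inl (.inl i) => ![2 * n, 2 * i]
  | .inl (.inr j) => ![2 * j, 2 * n - 2]
  | .inr (.inl (i, j)) => ![2 * j + 1, 2 * i]
  | .inr (.inr (i, j)) => ![2 * j + 1, 2 * i - 1]

def axis : BnV n → Fin 2
  | .inl (.inl _) | .inr (.inr _) => 0
  | .inl (.inr _) | .inr (.inl _) => 1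

lemma lo_le_hi (v : BnV n) (k : Fin 2) : lo v k ≤ hi v k := by
  rcases v with (i | j) | (⟨i, j⟩ | ⟨i, j⟩) <;> fin_cases k <;> simp [lo, hi]

lemma lo_eq_hi_of_ne_axis (v : BnV n) (k : Fin 2) (hk : k ≠ axis v) : lo v k = hi v k := by
  rcases v with (i | j) | (⟨i, j⟩ | ⟨i, j⟩) <;> fin_cases k <;> simp_all [lo, hi, axis]

lemma hi_sub_lo_axis (v : BnV n) :
    hi v (axis v) - lo v (axis v) = 2 * n ∨ hi v (axis v) - lo v (axis v) = 1 := by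
  rcases v with (i | j) | (⟨i, j⟩ | ⟨i, j⟩) <;> simp [lo, hi, axis]

lemma corners_injective : Function.Injective fun v : BnV n => (lo v, hi v) := by
  rintro ((i | j) | (⟨i, j⟩ | ⟨i, j⟩)) ((i' | j') | (⟨i', j'⟩ | ⟨i', j'⟩)) h <;>
    simp [lo, hi, funext_iff, Fin.forall_fin_two, Fin.ext_iff] at h ⊢ <;> omega

lemma adj_iff_boxes_meet {u v : BnV n} (huv : u ≠ v) :
    (BnGraph n).Adj u v ↔ ∀ k, lo u k ≤ hi v k ∧ lo v k ≤ hi u k := by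
  rcases u with (i | j) | (⟨i, j⟩ | ⟨i, j⟩) <;> rcases v with (i' | j') | (⟨i', j'⟩ | ⟨i', j'⟩) <;>
    simp [BnGraph, BnRel, lo, hi, Fin.forall_fin_two, Fin.ext_iff, Prod.ext_iff] at huv ⊢ <;> omega

end BnGraph

open BnGraph EuclideanSpace in
theorem stmt8_general (n : ℕ) :
    ∃ p q : BnV n → EuclideanSpace ℝ (Fin 2),
      (∀ v : BnV n, p v 0 = q v 0 ∨ p v 1 = q v 1) ∧
      (∃ l₁ l₂ : ℝ, ∀ v : BnV n, dist (p v) (q v) = l₁ ∨ dist (p v) (q v) = l₂) ∧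
      Function.Injective (fun v : BnV n => segment ℝ (p v) (q v)) ∧
      (∀ u v : BnV n, u ≠ v →
        ((BnGraph n).Adj u v ↔
          (segment ℝ (p u) (q u) ∩ segment ℝ (p v) (q v)).Nonempty)) := by
  set p : BnV n → EuclideanSpace ℝ (Fin 2) := fun v => WithLp.toLp 2 fun k => (lo v k : ℝ)
  set q : BnV n → EuclideanSpace ℝ (Fin 2) := fun v => WithLp.toLp 2 fun k => (hi v k : ℝ)
  have hpq (v : BnV n) (k : Fin 2) : p v k ≤ q v k := by simpa [p, q] using lo_le_hi v k
  have haxis (v : BnV n) (k : Fin 2) (hk : k ≠ axis v) : p v k = q v k := by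
    simpa [p, q] using lo_eq_hi_of_ne_axis v k hk
  refine ⟨p, q, fun v => ?_, ⟨2 * n, 1, fun v => ?_⟩, fun u v huv => ?_, fun u v huv => ?_⟩
  · generalize hv : axis v = a at haxis
    fin_cases a
    exacts [Or.inr (haxis v 1 (by simp [hv])), Or.inl (haxis v 0 (by simp [hv]))]
  · rw [dist_eq_abs_of_forall_ne (axis v) (haxis v), abs_sub_comm,
      abs_of_nonneg (sub_nonneg.2 (hpq v _))]
    simp only [p, q]
    exact_mod_cast hi_sub_lo_axis v
  · obtain ⟨hp, hq⟩ := eq_and_eq_of_segment_eq (hpq u) (hpq v) huv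
    refine corners_injective (Prod.ext (funext fun k => ?_) (funext fun k => ?_))
    · simpa [p] using congrArg (· k) hp
    · simpa [q] using congrArg (· k) hq
  · rw [adj_iff_boxes_meet huv,
      segment_inter_nonempty_iff (hpq u) _ (haxis u) (hpq v) _ (haxis v)]
    simp [p, q]

/-- for every `n ≥ 1`, `B_n` is isomorphic to the intersection graph of a
finite family of axis-parallel closed segments in the plane among which at most two
distinct Euclidean lengths occur. -/
theorem stmt8 (n : ℕ) (hn : 1 ≤ n) :
    ∃ p q : BnV n → EuclideanSpace ℝ (Fin 2),
      (∀ v : BnV n, p v 0 = q v 0 ∨ p v 1 = q v 1) ∧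
      (∃ l₁ l₂ : ℝ, ∀ v : BnV n, dist (p v) (q v) = l₁ ∨ dist (p v) (q v) = l₂) ∧
      Function.Injective (fun v : BnV n => segment ℝ (p v) (q v)) ∧
      (∀ u v : BnV n, u ≠ v →
        ((BnGraph n).Adj u v ↔
          (segment ℝ (p u) (q u) ∩ segment ℝ (p v) (q v)).Nonempty)) :=
  stmt8_general n
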